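/- Let C be the SSPwCT choice rule in which, when a slot selects a contract of agent i, all other contracts of agent i are removed from consideration by later slots, and let C̄ be the variant in which only the selected contract itself is removed. Then C̄ is a completion of C: for every offer set Y, either C̄(Y) = C(Y), or C̄(Y) contains two distinct contracts of the same agent. -/

import Mathlib

/-!
Run the two rules side by side. As long as `C̄` has not selected two contracts of one agent,
the contracts still available to `C` are those available to `C̄` minus contracts of agents that
`C̄` has already served. Since slot priorities are strict, a slot then selects the same
contract under both rules, unless the contract `C̄` selects is unavailable to `C`; but then `C̄`
has selected a second contract of an agent it already serves.
-/

open Finset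
variable {X I : Type*} [DecidableEq X] [Fintype X] [DecidableEq I]

/-- Select the `π`-maximal element of `Y ∪ {∅}` (higher value = higher priority). -/
noncomputable def pick (π : Option X → ℕ) (Y : Finset X) : Option X :=
  (((insert (none : Option X) (Y.image some)).toList).argmax π).join

/-- The completed choice rule `C̄`: each slot is a priority order together with an
activation rule depending on the fill-history of earlier slots; an active slot
selects the priority-maximal remaining contract, and only the selected contract
itself is removed for later slots. -/
noncomputable def runBar :
    List ((Option X → ℕ) × (List Bool → Bool)) → List Bool → Finset X → Finset X
  | [], _, _ => ∅
  | (π, act) :: L, h, Y =>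
    if act h then
      match pick π Y with
      | none => runBar L (h ++ [false]) Y
      | some x => insert x (runBar L (h ++ [true]) (Y.erase x))
    else runBar L (h ++ [false]) Y

/-- The SSPwCT choice rule `C`: as `runBar`, except that when a slot selects a
contract of agent `ag x`, all contracts of that agent are removed for later slots. -/
noncomputable def runC (ag : X → I) :
    List ((Option X → ℕ) × (List Bool → Bool)) → List Bool → Finset X → Finset X
  | [], _, _ => ∅
  | (π, act) :: L, h, Y =>
    if act h then
      match pick π Y with
      | none => runC ag L (h ++ [false]) Y
      | some x => insert x (runC ag L (h ++ [true]) (Y.filter (fun y => ag y ≠ ag x)))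
    else runC ag L (h ++ [false]) Y

section

variable {α ι : Type*}

theorem mem_insert_none_image_some [DecidableEq α] {s : Finset α} {o : Option α} :
    o ∈ insert none (s.image some) ↔ ∀ a ∈ o, a ∈ s := by
  cases o <;> simp

theorem pick_mem_argmax [DecidableEq α] (π : Option α → ℕ) (Y : Finset α) :
    pick π Y ∈ (insert none (Y.image some)).toList.argmax π := by
  obtain ⟨m, hm⟩ : ∃ m, (insert none (Y.image some)).toList.argmax π = some m :=
    Option.ne_none_iff_exists'.1 fun h => by simpa using List.argmax_eq_none.1 h
  simp [pick, hm]

theorem mem_of_mem_pick [DecidableEq α] {π : Option α → ℕ} {Y : Finset α} :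
    ∀ x ∈ pick π Y, x ∈ Y :=
  mem_insert_none_image_some.1 (mem_toList.1 (List.argmax_mem (pick_mem_argmax π Y)))

theorem le_pick [DecidableEq α] (π : Option α → ℕ) {Y : Finset α} {o : Option α}
    (ho : ∀ x ∈ o, x ∈ Y) : π o ≤ π (pick π Y) :=
  List.le_of_mem_argmax (mem_toList.2 (mem_insert_none_image_some.2 ho)) (pick_mem_argmax π Y)

theorem pick_eq_of_subset [DecidableEq α] {π : Option α → ℕ} (hπ : Function.Injective π)
    {Y Z : Finset α} (hZY : Z ⊆ Y) (h : ∀ x ∈ pick π Y, x ∈ Z) : pick π Z = pick π Y :=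
  hπ (le_antisymm (le_pick π fun _ hx => hZY (mem_of_mem_pick _ hx)) (le_pick π h))

def HasAgentClash (ag : α → ι) (S : Finset α) : Prop :=
  ∃ x ∈ S, ∃ x' ∈ S, x ≠ x' ∧ ag x = ag x'

theorem HasAgentClash.mono {ag : α → ι} {S T : Finset α} (hST : S ⊆ T)
    (h : HasAgentClash ag S) : HasAgentClash ag T := by
  obtain ⟨x, hx, x', hx', hne, hag⟩ := h
  exact ⟨x, hST hx, x', hST hx', hne, hag⟩

/-- `Y` and `Z` are the sets still available to `C̄` and to `C`, and `A` is what `C̄` has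
already selected: `C` lags behind `C̄` only by contracts of agents that `C̄` already serves. -/
def LagsByServedAgents [DecidableEq α] (ag : α → ι) (A Y Z : Finset α) : Prop :=
  Z ⊆ Y ∧ ∀ y ∈ Y \ Z, ∃ a ∈ A \ Y, ag a = ag y

theorem lagsByServedAgents_self [DecidableEq α] (ag : α → ι) (A Y : Finset α) :
    LagsByServedAgents ag A Y Y :=
  ⟨subset_rfl, by simp⟩

namespace LagsByServedAgents

variable [DecidableEq α] {ag : α → ι} {A Y Z : Finset α}

theorem select [DecidableEq ι] (h : LagsByServedAgents ag A Y Z) (x : α) :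
    LagsByServedAgents ag (insert x A) (Y.erase x) (Z.filter fun y => ag y ≠ ag x) := by
  obtain ⟨hZY, hgap⟩ := h
  refine ⟨fun z hz => ?_, fun y hy => ?_⟩
  · obtain ⟨hzZ, hzx⟩ := mem_filter.1 hz
    exact mem_erase.2 ⟨fun h => hzx (h ▸ rfl), hZY hzZ⟩
  · obtain ⟨hy, hyZ⟩ := mem_sdiff.1 hy
    have hyY := mem_of_mem_erase hy
    by_cases hyZ' : y ∈ Z
    · have hag : ag y = ag x := by simpa [hyZ'] using hyZ
      exact ⟨x, by simp, hag.symm⟩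
    · obtain ⟨a, ha, hag⟩ := hgap y (mem_sdiff.2 ⟨hyY, hyZ'⟩)
      obtain ⟨haA, haY⟩ := mem_sdiff.1 ha
      exact ⟨a, mem_sdiff.2 ⟨mem_insert_of_mem haA, fun h => haY (mem_of_mem_erase h)⟩, hag⟩

theorem hasAgentClash_insert (h : LagsByServedAgents ag A Y Z) {x : α} (hxY : x ∈ Y)
    (hxZ : x ∉ Z) : HasAgentClash ag (insert x A) := by
  obtain ⟨a, ha, hag⟩ := h.2 x (mem_sdiff.2 ⟨hxY, hxZ⟩)
  obtain ⟨haA, haY⟩ := mem_sdiff.1 ha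
  exact ⟨x, mem_insert_self x A, a, mem_insert_of_mem haA, fun h => haY (h ▸ hxY), hag.symm⟩

end LagsByServedAgents

theorem runBar_eq_runC_or_hasAgentClash [DecidableEq α] [DecidableEq ι] (ag : α → ι)
    {L : List ((Option α → ℕ) × (List Bool → Bool))}
    (hinj : ∀ p ∈ L, Function.Injective p.1) (h : List Bool) {A Y Z : Finset α} (hlag : LagsByServedAgents ag A Y Z) :
    runBar L h Y = runC ag L h Z ∨ HasAgentClash ag (A ∪ runBar L h Y) := by
  induction L generalizing h A Y Z with
  | nil => simp [runBar, runC]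
  | cons p L ih =>
    obtain ⟨π, act⟩ := p
    have hπ : Function.Injective π := hinj _ List.mem_cons_self
    replace ih := ih fun p hp => hinj p (List.mem_cons_of_mem _ hp)
    by_cases hact : act h
    · rcases hpY : pick π Y with _ | x
      · have hpZ : pick π Z = none := (pick_eq_of_subset hπ hlag.1 (by simp [hpY])).trans hpY
        simpa [runBar, runC, hact, hpY, hpZ] using ih (h ++ [false]) hlag
      · have hxY : x ∈ Y := mem_of_mem_pick x hpY
        by_cases hxZ : x ∈ Z
        · have hpZ : pick π Z = some x :=
            (pick_eq_of_subset hπ hlag.1 (by simpa [hpY])).trans hpY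
          simp only [runBar, runC, hact, hpY, hpZ, if_true]
          rcases ih (h ++ [true]) (hlag.select x) with heq | hclash
          · exact Or.inl (congrArg (insert x) heq)
          · exact Or.inr (hclash.mono (by grind))
        · right
          simp only [runBar, hact, hpY, if_true]
          exact (hlag.hasAgentClash_insert hxY hxZ).mono (by grind)
    · simpa [runBar, runC, hact] using ih (h ++ [false]) hlag

end

/-- `C̄` is a completion of `C`: for every offer set, either the two rules agree,
or `C̄` chooses two distinct contracts of the same agent. -/
theorem runBar_completion_of_runC (ag : X → I)
    (L : List ((Option X → ℕ) × (List Bool → Bool)))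
    (hinj : ∀ p ∈ L, Function.Injective p.1) (Y : Finset X) :
    runBar L [] Y = runC ag L [] Y ∨
      ∃ x ∈ runBar L [] Y, ∃ x' ∈ runBar L [] Y, x ≠ x' ∧ ag x = ag x' := by
  simpa [HasAgentClash] using
    runBar_eq_runC_or_hasAgentClash ag hinj [] (lagsByServedAgents_self ag ∅ Y)
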